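/- Let θ : ℕ → ℝ be square-summable with infinitely many nonzero coordinates, and let τ > 0. Then d_τ(θ,ε) → ∞ as ε → 0+; that is, for every M ≥ 1 there exists ε₀ > 0 such that d_τ(θ,ε) ≥ M for all 0 < ε < ε₀. -/
import Mathlib


open MeasureTheory ProbabilityTheory

noncomputable section

/-- Tail sum `∑_{i>d} θ_i²` (indices `i = 1,2,…`). -/
def tailSum (θ : ℕ → ℝ) (d : ℕ) : ℝ := ∑' i : ℕ, if d < i then θ i ^ 2 else 0

/-- The τ-quantization error `r_τ(d,θ) = ∑_{i>d} θ_i² + τ d ε²`. -/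
def rErr (ε τ : ℝ) (θ : ℕ → ℝ) (d : ℕ) : ℝ := tailSum θ d + τ * d * ε ^ 2

/-- The local effective τ-dimension: the smallest `d ≥ 1` minimizing `r_τ(·,θ)` over `d ≥ 1`. -/
def effDim (ε τ : ℝ) (θ : ℕ → ℝ) : ℕ :=
  sInf {d : ℕ | 1 ≤ d ∧ ∀ d' : ℕ, 1 ≤ d' → rErr ε τ θ d ≤ rErr ε τ θ d'}

/-- The penalized criterion `crit_A(x,d) = -∑_{i=1}^d x_i² + A ε² d`. -/
def critF (ε A : ℝ) (x : ℕ → ℝ) (d : ℕ) : ℝ :=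
  -(∑ i ∈ Finset.Icc 1 d, x i ^ 2) + A * ε ^ 2 * d

/-- `f(h,a,t) = (1/2)(a h + log(1-h) - t h/(1-h))`. -/
def fFun (h a t : ℝ) : ℝ := (a * h + Real.log (1 - h) - t * h / (1 - h)) / 2

/-- `g(h,a,t) = f(-h,a,t)`. -/
def gFun (h a t : ℝ) : ℝ := fFun (-h) a t

/-- `f_o(a,t) = sup_{h ∈ [0,1)} f(h,a,t)`. -/
def fSup (a t : ℝ) : ℝ := sSup ((fun h => fFun h a t) '' Set.Ico 0 1)

/-- `g_o(a,t) = sup_{h ∈ [0,1]} g(h,a,t)`. -/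
def gSup (a t : ℝ) : ℝ := sSup ((fun h => gFun h a t) '' Set.Icc 0 1)

/-- `P` is the infinite product measure `⨂_{i≥1} N(θ_i, ε²)` on the sequence space `ℝ^ℕ`,
characterized by being a probability measure whose finite-dimensional projections onto
the coordinates `1,…,n` are the corresponding finite products of Gaussians. -/
def IsGaussianProduct (ε : ℝ) (θ : ℕ → ℝ) (P : Measure (ℕ → ℝ)) : Prop :=
  IsProbabilityMeasure P ∧
  ∀ n : ℕ, P.map (fun x (i : Fin n) => x ((i : ℕ) + 1)) =
    Measure.pi fun i : Fin n => gaussianReal (θ ((i : ℕ) + 1)) ((ε ^ 2).toNNReal)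

lemma tailSum_summable (θ : ℕ → ℝ) (hθ : Summable fun i => θ i ^ 2) (d : ℕ) :
    Summable (fun i => if d < i then θ i ^ 2 else 0) := by
  apply Summable.of_nonneg_of_le (fun i => by split <;> [exact sq_nonneg _; exact le_rfl])
    (fun i => by split <;> [exact le_rfl; exact sq_nonneg _]) hθ

lemma tailSum_nonneg (θ : ℕ → ℝ) (d : ℕ) : 0 ≤ tailSum θ d :=
  tsum_nonneg fun i => by split <;> [exact sq_nonneg _; exact le_rfl]

lemma tailSum_split (θ : ℕ → ℝ) (hθ : Summable fun i => θ i ^ 2) {d D : ℕ} (h : d ≤ D) :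
    tailSum θ d = (∑ i ∈ Finset.Ioc d D, θ i ^ 2) + tailSum θ D := by
  have hs := tailSum_summable θ hθ D
  have hfin : Summable (fun i => if i ∈ Finset.Ioc d D then θ i ^ 2 else 0) :=
    summable_of_ne_finset_zero (s := Finset.Ioc d D) (by intro i hi; simp [hi])
  have key : ∀ i, (if d < i then θ i ^ 2 else 0) =
      (if i ∈ Finset.Ioc d D then θ i ^ 2 else 0) + (if D < i then θ i ^ 2 else 0) := by
    intro i
    simp only [Finset.mem_Ioc]
    by_cases h1 : d < i <;> by_cases h2 : D < i
    · simp [h1, h2, not_le.mpr h2]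
    · simp [h1, h2, not_lt.mp h2]
    · omega
    · simp [h1, h2]
  calc tailSum θ d = ∑' i, ((if i ∈ Finset.Ioc d D then θ i ^ 2 else 0)
        + (if D < i then θ i ^ 2 else 0)) := tsum_congr key
    _ = (∑' i, if i ∈ Finset.Ioc d D then θ i ^ 2 else 0) + tailSum θ D := Summable.tsum_add hfin hs
    _ = _ := by
        congr 1
        rw [tsum_eq_sum (s := Finset.Ioc d D) (by intro i hi; simp [hi])]
        exact Finset.sum_congr rfl (fun i hi => by simp [hi])

theorem stmt19 (τ : ℝ) (hτ : 0 < τ) (θ : ℕ → ℝ) (hθ : Summable fun i => θ i ^ 2)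
    (hinf : {i : ℕ | 1 ≤ i ∧ θ i ≠ 0}.Infinite) :
    ∀ M : ℕ, 1 ≤ M → ∃ ε₀ : ℝ, 0 < ε₀ ∧
      ∀ ε : ℝ, 0 < ε → ε < ε₀ → M ≤ effDim ε τ θ := by
  intro M hM
  obtain ⟨D, hDmem, hDM⟩ := hinf.exists_gt M
  have hD1 : 1 ≤ D := hDmem.1
  have hDθ : θ D ≠ 0 := hDmem.2
  set δ : ℝ := θ D ^ 2 with hδ
  have hδpos : 0 < δ := by positivity
  have hD0 : (0:ℝ) < D := by exact_mod_cast hD1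
  refine ⟨Real.sqrt (δ / (τ * D)), Real.sqrt_pos.mpr (by positivity), ?_⟩
  intro ε hε hεlt
  have hε2 : τ * D * ε ^ 2 < δ := by
    have h1 : ε ^ 2 < δ / (τ * D) := by
      have := Real.sq_sqrt (le_of_lt (show (0:ℝ) < δ / (τ*D) by positivity))
      calc ε ^ 2 < Real.sqrt (δ / (τ * D)) ^ 2 := by
            apply pow_lt_pow_left₀ hεlt hε.le; norm_num
        _ = δ / (τ * D) := by rw [sq, ← Real.sqrt_mul_self (Real.sqrt_nonneg _)] at this ⊢; exact this
    calc τ * D * ε ^2 < τ * D * (δ / (τ * D)) := by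
          apply mul_lt_mul_of_pos_left h1; positivity
      _ = δ := by field_simp
  -- key comparison: any d with 1 ≤ d < M has rErr ε τ θ d > rErr ε τ θ D
  have hcomp : ∀ d : ℕ, d < M → rErr ε τ θ D < rErr ε τ θ d := by
    intro d hdM
    have hdD : d ≤ D := le_of_lt (lt_trans hdM hDM)
    have htail : tailSum θ D + δ ≤ tailSum θ d := by
      rw [tailSum_split θ hθ hdD]
      have : δ ≤ ∑ i ∈ Finset.Ioc d D, θ i ^ 2 := by
        apply Finset.single_le_sum (f := fun i => θ i ^ 2) (fun i _ => sq_nonneg _)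
        simp [Finset.mem_Ioc]; omega
      linarith
    unfold rErr
    have : (0:ℝ) ≤ τ * d * ε ^ 2 := by positivity
    linarith
  -- the minimizer set is nonempty
  set S := {d : ℕ | 1 ≤ d ∧ ∀ d' : ℕ, 1 ≤ d' → rErr ε τ θ d ≤ rErr ε τ θ d'} with hS
  have hSne : S.Nonempty := by
    obtain ⟨N, hN⟩ := exists_nat_gt (rErr ε τ θ 1 / (τ * ε ^ 2))
    have hN1 : 1 ≤ max N 1 := le_max_right _ _
    obtain ⟨m, hmmem, hmmin⟩ := Finset.exists_min_image (Finset.Icc 1 (max N 1))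
      (rErr ε τ θ) ⟨1, by simp [hN1]⟩
    rw [Finset.mem_Icc] at hmmem
    refine ⟨m, hmmem.1, ?_⟩
    intro d' hd'
    by_cases hle : d' ≤ max N 1
    · exact hmmin d' (Finset.mem_Icc.mpr ⟨hd', hle⟩)
    · push_neg at hle
      have h1 : rErr ε τ θ m ≤ rErr ε τ θ 1 := hmmin 1 (by simp [hN1])
      have h2 : rErr ε τ θ 1 < τ * d' * ε ^ 2 := by
        have hNd : (N:ℝ) < d' := by exact_mod_cast lt_of_le_of_lt (le_max_left N 1) hle
        have := (div_lt_iff₀ (by positivity : (0:ℝ) < τ * ε ^ 2)).mp hN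
        calc rErr ε τ θ 1 < N * (τ * ε ^ 2) := this
          _ ≤ d' * (τ * ε ^ 2) := by
              apply mul_le_mul_of_nonneg_right hNd.le; positivity
          _ = τ * d' * ε ^ 2 := by ring
      have h3 : τ * d' * ε ^ 2 ≤ rErr ε τ θ d' := by
        unfold rErr; have := tailSum_nonneg θ d'; linarith
      linarith
  have hmem := Nat.sInf_mem hSne
  show M ≤ sInf S
  by_contra hcon
  push_neg at hcon
  exact absurd (hmem.2 D hD1) (not_le.mpr (hcomp _ hcon))
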